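/- arXiv:2511.07365 — 4 statements merged into one kernel-verified Lean document; each statement's English description precedes it below -/
import Mathlib

section
/- Let X ∈ ℝ^{n×d}, y ∈ ℝ^n, and let A = [X y] ∈ ℝ^{n×(d+1)} be X with y appended as an extra column. Let S ∈ ℝ^{r×n} and 0 < μ < 1, and assume S is a two-sided ℓ₂ subspace embedding for A: for every v ∈ ℝ^{d+1}, (1−μ)‖Av‖₂² ≤ ‖SAv‖₂² ≤ (1+μ)‖Av‖₂². If β ∈ ℝ^d minimizes the sketched least-squares objective β̃ ↦ ‖SXβ̃ − Sy‖₂, then for every β̃ ∈ ℝ^d, ‖Xβ − y‖₂² ≤ ((1+μ)/(1−μ))·‖Xβ̃ − y‖₂²; in particular the sketched solution is a ((1+μ)/(1−μ))-approximate minimizer of the original least-squares objective ‖Xβ̃ − y‖₂². -/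
open Matrix BigOperators

/-- Squared Euclidean norm of a vector. -/
def euclNormSq {ι : Type*} [Fintype ι] (v : ι → ℝ) : ℝ := ∑ i, (v i) ^ 2

/-- Euclidean norm of a vector. -/
noncomputable def euclNorm {ι : Type*} [Fintype ι] (v : ι → ℝ) : ℝ :=
  Real.sqrt (∑ i, (v i) ^ 2)

lemma euclNormSq_nonneg {ι : Type*} [Fintype ι] (v : ι → ℝ) : 0 ≤ euclNormSq v :=
  Finset.sum_nonneg fun i _ => sq_nonneg _

lemma euclNorm_sq {ι : Type*} [Fintype ι] (v : ι → ℝ) :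
    euclNorm v ^ 2 = euclNormSq v := by
  rw [euclNorm, euclNormSq]
  exact Real.sq_sqrt (Finset.sum_nonneg fun i _ => sq_nonneg _)

/-- Sketch-and-solve guarantee for least squares: if `S` is a two-sided `ℓ₂` subspace
embedding for `A = [X y]` with distortion `μ`, and `β` minimizes the sketched objective
`β̃ ↦ ‖S X β̃ − S y‖₂`, then `β` is a `((1+μ)/(1−μ))`-approximate minimizer of
`β̃ ↦ ‖X β̃ − y‖₂²`. -/
theorem stmt4 {n d r : ℕ} (X : Matrix (Fin n) (Fin d) ℝ) (y : Fin n → ℝ)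
    (A : Matrix (Fin n) (Fin d ⊕ Unit) ℝ)
    (hA : A = fun i => Sum.elim (X i) (fun _ => y i))
    (S : Matrix (Fin r) (Fin n) ℝ) (μ : ℝ) (hμ0 : 0 < μ) (hμ1 : μ < 1)
    (hembed : ∀ v : Fin d ⊕ Unit → ℝ,
      (1 - μ) * euclNormSq (A.mulVec v) ≤ euclNormSq ((S * A).mulVec v) ∧
      euclNormSq ((S * A).mulVec v) ≤ (1 + μ) * euclNormSq (A.mulVec v))
    (β : Fin d → ℝ)
    (hmin : ∀ βt : Fin d → ℝ,
      euclNorm ((S * X).mulVec β - S.mulVec y) ≤ euclNorm ((S * X).mulVec βt - S.mulVec y)) :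
    ∀ βt : Fin d → ℝ,
      euclNormSq (X.mulVec β - y) ≤ ((1 + μ) / (1 - μ)) * euclNormSq (X.mulVec βt - y) := by
  intro βt
  have hAv : ∀ b : Fin d → ℝ,
      A.mulVec (Sum.elim b (fun _ => -1)) = X.mulVec b - y := by
    intro b
    funext i
    simp [hA, mulVec, dotProduct, Fintype.sum_sum_type, sub_eq_add_neg]
  have hSAv : ∀ b : Fin d → ℝ,
      (S * A).mulVec (Sum.elim b (fun _ => -1)) = (S * X).mulVec b - S.mulVec y := by
    intro b
    rw [← mulVec_mulVec, hAv, ← mulVec_mulVec]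
    simp [Matrix.mulVec_sub]
  have h1 := (hembed (Sum.elim β (fun _ => -1))).1
  have h2 := (hembed (Sum.elim βt (fun _ => -1))).2
  rw [hAv, hSAv] at h1
  rw [hAv, hSAv] at h2
  have hmono : euclNormSq ((S * X).mulVec β - S.mulVec y)
      ≤ euclNormSq ((S * X).mulVec βt - S.mulVec y) := by
    rw [← euclNorm_sq, ← euclNorm_sq]
    have h0 : 0 ≤ euclNorm ((S * X).mulVec β - S.mulVec y) := Real.sqrt_nonneg _
    exact pow_le_pow_left₀ h0 (hmin βt) 2
  have key : (1 - μ) * euclNormSq (X.mulVec β - y)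
      ≤ (1 + μ) * euclNormSq (X.mulVec βt - y) := le_trans h1 (le_trans hmono h2)
  rw [div_mul_eq_mul_div, le_div_iff₀ (by linarith), mul_comm]
  linarith
end

section
/- Let S ∈ ℝ^{r×n} be a matrix with all entries in {0,1} such that every column of S has at most h nonzero entries. Let A, A' ∈ ℝ^{n×m} agree in every row except possibly row k, and suppose every row of A and of A' has ℓ₂ norm at most B. Then ‖SA − SA'‖_F ≤ 2B·√h; i.e., the ℓ₂ sensitivity of the map A ↦ SA with respect to changing one row is at most 2B√h. -/
open Matrix BigOperators

/-- Frobenius norm of a matrix. -/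
noncomputable def frobNorm {ι κ : Type*} [Fintype ι] [Fintype κ] (M : Matrix ι κ ℝ) : ℝ :=
  Real.sqrt (∑ i, ∑ j, (M i j) ^ 2)

/-! The change of one row of `A` changes `SA` by the rank-one matrix
(column `k` of `S`) ⊗ (change of row `k`), whose Frobenius norm factors; a column of a
`0/1` matrix with at most `h` ones has Euclidean norm at most `√h`, and the row change
has norm at most `2B` by the triangle inequality. -/

section

variable {ι κ : Type*} [Fintype ι] [Fintype κ]

lemma euclNorm_eq_norm_toLp (v : ι → ℝ) : euclNorm v = ‖WithLp.toLp 2 v‖ := by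
  simp [euclNorm, EuclideanSpace.norm_eq]

lemma euclNorm_sub_le (v w : ι → ℝ) : euclNorm (v - w) ≤ euclNorm v + euclNorm w := by
  simpa only [euclNorm_eq_norm_toLp, WithLp.toLp_sub] using
    norm_sub_le (WithLp.toLp 2 v) (WithLp.toLp 2 w)

lemma euclNorm_eq_sqrt_card_of_zero_or_one {v : ι → ℝ} (hv : ∀ i, v i = 0 ∨ v i = 1) :
    euclNorm v = Real.sqrt (Finset.univ.filter fun i => v i ≠ 0).card := by
  classical
  have hsq : ∀ i, v i ^ 2 = if v i ≠ 0 then 1 else 0 := fun i => by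
    rcases hv i with h0 | h1 <;> simp [*]
  simp only [euclNorm, hsq, Finset.sum_boole]

lemma frobNorm_vecMulVec (u : ι → ℝ) (v : κ → ℝ) :
    frobNorm (vecMulVec u v) = euclNorm u * euclNorm v := by
  have hsum : ∑ i, ∑ j, vecMulVec u v i j ^ 2 = (∑ i, u i ^ 2) * ∑ j, v j ^ 2 := by
    simp only [vecMulVec_apply, mul_pow, Finset.sum_mul_sum]
  rw [frobNorm, euclNorm, euclNorm, hsum,
    Real.sqrt_mul (Finset.sum_nonneg fun i _ => sq_nonneg (u i))]

end

lemma mul_sub_mul_eq_vecMulVec_of_eq_of_ne {ρ ι κ : Type*} [Fintype ι] (S : Matrix ρ ι ℝ)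
    {A A' : Matrix ι κ ℝ} {k : ι} (hAA' : ∀ i, i ≠ k → A i = A' i) :
    S * A - S * A' = vecMulVec (fun i => S i k) (A k - A' k) := by
  ext i j
  rw [← Matrix.mul_sub, mul_apply, Finset.sum_eq_single k]
  · simp [vecMulVec_apply]
  · intro l _ hl
    simp [hAA' l hl]
  · simp

/-- If `S` has entries in `{0,1}` with at most `h` nonzero entries per column, and
`A, A'` agree in every row except possibly row `k`, with all rows of `A` and `A'` of
`ℓ₂` norm at most `B`, then `‖SA − SA'‖_F ≤ 2B√h`. -/
theorem stmt8 {r n m : ℕ} (S : Matrix (Fin r) (Fin n) ℝ)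
    (hS01 : ∀ i j, S i j = 0 ∨ S i j = 1)
    (h : ℕ)
    (hScol : ∀ j : Fin n, (Finset.univ.filter fun i : Fin r => S i j ≠ 0).card ≤ h)
    (A A' : Matrix (Fin n) (Fin m) ℝ) (k : Fin n)
    (hneighbour : ∀ i : Fin n, i ≠ k → A i = A' i)
    (B : ℝ) (hB : ∀ i, euclNorm (A i) ≤ B) (hB' : ∀ i, euclNorm (A' i) ≤ B) :
    frobNorm (S * A - S * A') ≤ 2 * B * Real.sqrt h := by
  have hcol : euclNorm (fun i => S i k) ≤ Real.sqrt h := by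
    rw [euclNorm_eq_sqrt_card_of_zero_or_one fun i => hS01 i k]
    exact Real.sqrt_le_sqrt (by exact_mod_cast hScol k)
  have hrow : euclNorm (A k - A' k) ≤ 2 * B := by
    linarith [euclNorm_sub_le (A k) (A' k), hB k, hB' k]
  rw [mul_sub_mul_eq_vecMulVec_of_eq_of_ne S hneighbour, frobNorm_vecMulVec, mul_comm (2 * B)]
  exact mul_le_mul hcol hrow (Real.sqrt_nonneg _) (Real.sqrt_nonneg _)
end

section
/- Let σ > 0, let m, d ≥ 1, and let η be an m×d random matrix whose rows are i.i.d. samples from the isotropic Gaussian N(0, σ²I_d). Then for every fixed β ∈ ℝ^d, with probability at least 3/4, ‖ηβ‖₁ ≤ σ·‖β‖₂·√(2m² ln 2 + 2m ln 4); since ‖β‖₂ ≤ ‖β‖₁, the same bound holds with ‖β‖₁ in place of ‖β‖₂. In particular, with σ = (2B/ε)√(2 ln(1.25/δ)) this bounds the ℓ₁ regularization coefficient ‖ηβ‖₁ incurred when ℓ₁ regression is solved on the noise-augmented private sketch. -/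
/-!
The `ℓ₁` norm of `x ∈ ℝᵐ` is the largest of the `2ᵐ` sums `∑ᵢ sᵢ xᵢ` over sign vectors
`s ∈ {±1}ᵐ`. For `x = ηβ`, each such sum `∑ᵢⱼ sᵢ βⱼ ηᵢⱼ` is a linear combination of independent
`N(0, σ²)` entries, hence sub-Gaussian with variance proxy `mσ²‖β‖₂²`. A union bound over the sign
vectors of the Chernoff bounds `exp (-t² / (2mσ²‖β‖₂²))` gives `2ᵐ · exp (-(m ln 2 + ln 4)) = 1/4`
at the threshold `t = σ‖β‖₂ √(2m² ln 2 + 2m ln 4)`.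
-/

open Matrix MeasureTheory ProbabilityTheory BigOperators
open scoped NNReal ENNReal
open Real

lemma Matrix.sum_mul_mulVec {ι κ R : Type*} [Fintype ι] [Fintype κ] [CommSemiring R]
    (A : Matrix ι κ R) (β : κ → R) (u : ι → R) :
    ∑ i, u i * (A *ᵥ β) i = ∑ p : ι × κ, (u p.1 * β p.2) * A p.1 p.2 := by
  simp only [mulVec, dotProduct, Finset.mul_sum, Fintype.sum_prod_type, mul_assoc,
    mul_comm (A _ _)]

lemma sum_nnnorm_units_mul_sq {ι κ : Type*} [Fintype ι] [Fintype κ] (s : ι → ℤˣ) (β : κ → ℝ) :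
    ∑ p : ι × κ, ‖(s p.1 : ℝ) * β p.2‖₊ ^ 2 = Fintype.card ι * ∑ j, ‖β j‖₊ ^ 2 := by
  have hs : ∀ i, ‖(s i : ℝ)‖₊ = 1 := fun i ↦ by
    rcases Int.units_eq_one_or (s i) with h | h <;> simp [h]
  simp [Fintype.sum_prod_type, hs]

lemma sqrt_sum_sq_le_sum_abs {ι : Type*} (s : Finset ι) (f : ι → ℝ) :
    √(∑ i ∈ s, f i ^ 2) ≤ ∑ i ∈ s, |f i| := by
  rw [sqrt_le_left (Finset.sum_nonneg fun i _ ↦ abs_nonneg (f i))]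
  simpa only [sq_abs] using Finset.sum_sq_le_sq_sum_of_nonneg fun i _ ↦ abs_nonneg (f i)

lemma two_pow_mul_exp_neg_eq_one_fourth {m : ℕ} (hm : 1 ≤ m) {b : ℝ} (hb : 0 < b) :
    2 ^ m * exp (-(b * √(2 * m ^ 2 * log 2 + 2 * m * log 4)) ^ 2 / (2 * (m * b ^ 2)))
      = 1 / 4 := by
  have hR : 0 ≤ 2 * (m : ℝ) ^ 2 * log 2 + 2 * m * log 4 := by
    have := log_pos (by norm_num : (1 : ℝ) < 2)
    have := log_pos (by norm_num : (1 : ℝ) < 4)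
    positivity
  have hexponent : -(b * √(2 * m ^ 2 * log 2 + 2 * m * log 4)) ^ 2 / (2 * (m * b ^ 2))
      = -(m * log 2 + log 4) := by
    rw [mul_pow, sq_sqrt hR]
    field_simp
  rw [hexponent, Real.exp_neg, exp_add, ← log_pow, exp_log (by positivity), exp_log (by norm_num)]
  field_simp

namespace ProbabilityTheory

lemma hasSubgaussianMGF_id_gaussianReal (v : ℝ≥0) :
    HasSubgaussianMGF id v (gaussianReal 0 v) where
  integrable_exp_mul := integrable_exp_mul_gaussianReal
  mgf_le t := by rw [mgf_gaussianReal Measure.map_id]; simp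

variable {Ω : Type*} {mΩ : MeasurableSpace Ω} {μ : Measure Ω}

lemma hasSubgaussianMGF_of_map_eq_gaussianReal {X : Ω → ℝ} {v : ℝ≥0}
    (h : μ.map X = gaussianReal 0 v) : HasSubgaussianMGF X v μ := by
  have hX : AEMeasurable X μ := aemeasurable_of_map_neZero (by rw [h]; infer_instance)
  rw [← HasSubgaussianMGF.id_map_iff hX, h]
  exact hasSubgaussianMGF_id_gaussianReal v

lemma hasSubgaussianMGF_sum_mul_of_iIndepFun {ι : Type*} [Fintype ι] {Z : ι → Ω → ℝ}
    {v : ℝ≥0} (hindep : iIndepFun Z μ) (hlaw : ∀ p, μ.map (Z p) = gaussianReal 0 v)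
    (c : ι → ℝ) :
    HasSubgaussianMGF (fun ω ↦ ∑ p, c p * Z p ω) ((∑ p, ‖c p‖₊ ^ 2) * v) μ := by
  have hsum := HasSubgaussianMGF.sum_of_iIndepFun
    (iIndepFun.comp hindep (fun p x ↦ c p * x) fun p ↦ measurable_const_mul (c p))
    (s := Finset.univ) fun p _ ↦ (hasSubgaussianMGF_of_map_eq_gaussianReal (hlaw p)).const_mul (c p)
  have hproxy : ∑ p, ‖c p‖₊ ^ 2 * v = ∑ p, ⟨c p ^ 2, sq_nonneg _⟩ * v :=
    Finset.sum_congr rfl fun p _ ↦ congrArg (· * v) (NNReal.eq (sq_abs (c p)))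
  rw [Finset.sum_mul, hproxy]
  exact hsum

lemma measureReal_lt_sum_abs_le {ι : Type*} [Fintype ι] [IsFiniteMeasure μ] {X : ι → Ω → ℝ}
    {c : ℝ≥0} (hX : ∀ s : ι → ℤˣ, HasSubgaussianMGF (fun ω ↦ ∑ i, (s i : ℝ) * X i ω) c μ)
    {t : ℝ} (ht : 0 ≤ t) :
    μ.real {ω | t < ∑ i, |X i ω|} ≤ 2 ^ Fintype.card ι * exp (-t ^ 2 / (2 * c)) := by
  classical
  have hcover : {ω | t < ∑ i, |X i ω|} ⊆ ⋃ s : ι → ℤˣ, {ω | t ≤ ∑ i, (s i : ℝ) * X i ω} := by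
    intro ω hω
    refine Set.mem_iUnion.2 ⟨fun i ↦ if 0 ≤ X i ω then 1 else -1, ?_⟩
    refine le_of_lt (lt_of_lt_of_eq (show t < _ from hω) (Finset.sum_congr rfl fun i _ ↦ ?_))
    dsimp only
    split_ifs with h
    · simp [abs_of_nonneg h]
    · simp [abs_of_neg (not_le.1 h)]
  calc μ.real {ω | t < ∑ i, |X i ω|}
      ≤ ∑ s : ι → ℤˣ, μ.real {ω | t ≤ ∑ i, (s i : ℝ) * X i ω} :=
        (measureReal_mono hcover).trans (measureReal_iUnion_fintype_le _)
    _ ≤ ∑ _s : ι → ℤˣ, exp (-t ^ 2 / (2 * c)) :=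
        Finset.sum_le_sum fun s _ ↦ (hX s).measure_ge_le ht
    _ = 2 ^ Fintype.card ι * exp (-t ^ 2 / (2 * c)) := by
        simp [Fintype.card_units_int]

lemma ofReal_one_sub_le_measure_le_of_measureReal_lt_le [IsProbabilityMeasure μ] {f : Ω → ℝ}
    {t p : ℝ} (h : μ.real {ω | t < f ω} ≤ p) : ENNReal.ofReal (1 - p) ≤ μ {ω | f ω ≤ t} := by
  have hcompl : {ω | f ω ≤ t}ᶜ = {ω | t < f ω} := by ext; simp
  have hcover : 1 ≤ μ.real {ω | f ω ≤ t} + μ.real {ω | t < f ω} := by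
    simpa [← hcompl] using measureReal_union_le (μ := μ) {ω | f ω ≤ t} {ω | f ω ≤ t}ᶜ
  rw [← ofReal_measureReal]
  exact ENNReal.ofReal_le_ofReal (by linarith)

variable {ι κ : Type*} [Fintype ι] [Fintype κ] {η : Ω → Matrix ι κ ℝ} {v : ℝ≥0}

lemma hasSubgaussianMGF_sum_units_mul_mulVec
    (hindep : iIndepFun (fun (p : ι × κ) ω ↦ η ω p.1 p.2) μ)
    (hlaw : ∀ p : ι × κ, μ.map (fun ω ↦ η ω p.1 p.2) = gaussianReal 0 v) (β : κ → ℝ)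
    (s : ι → ℤˣ) :
    HasSubgaussianMGF (fun ω ↦ ∑ i, (s i : ℝ) * (η ω *ᵥ β) i)
      ((Fintype.card ι * ∑ j, ‖β j‖₊ ^ 2) * v) μ := by
  simp_rw [sum_mul_mulVec, ← sum_nnnorm_units_mul_sq s β]
  exact hasSubgaussianMGF_sum_mul_of_iIndepFun hindep hlaw _

lemma measureReal_lt_sum_abs_mulVec_le [IsFiniteMeasure μ]
    (hindep : iIndepFun (fun (p : ι × κ) ω ↦ η ω p.1 p.2) μ)
    (hlaw : ∀ p : ι × κ, μ.map (fun ω ↦ η ω p.1 p.2) = gaussianReal 0 v) (β : κ → ℝ)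
    {t : ℝ} (ht : 0 ≤ t) :
    μ.real {ω | t < ∑ i, |(η ω *ᵥ β) i|}
      ≤ 2 ^ Fintype.card ι * exp (-t ^ 2 / (2 * (Fintype.card ι * (v * ∑ j, β j ^ 2)))) := by
  convert measureReal_lt_sum_abs_le (hasSubgaussianMGF_sum_units_mul_mulVec hindep hlaw β) ht
    using 5
  push_cast [Real.norm_eq_abs, sq_abs]
  ring

end ProbabilityTheory

theorem stmt15_general {Ω : Type*} [MeasureSpace Ω] [IsProbabilityMeasure (ℙ : Measure Ω)]
    (σ : ℝ) (hσ : 0 < σ) (m d : ℕ) (hm : 1 ≤ m)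
    (η : Ω → Matrix (Fin m) (Fin d) ℝ)
    (hindep : iIndepFun
      (fun (p : Fin m × Fin d) ω => η ω p.1 p.2) ℙ)
    (hlaw : ∀ p : Fin m × Fin d,
      Measure.map (fun ω => η ω p.1 p.2) ℙ = gaussianReal 0 (σ ^ 2).toNNReal)
    (β : Fin d → ℝ) :
    ℙ {ω | ∑ i, |(η ω).mulVec β i| ≤
        σ * Real.sqrt (∑ j, (β j) ^ 2) *
          Real.sqrt (2 * m ^ 2 * Real.log 2 + 2 * m * Real.log 4)} ≥ 3 / 4 ∧
    ℙ {ω | ∑ i, |(η ω).mulVec β i| ≤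
        σ * (∑ j, |β j|) *
          Real.sqrt (2 * m ^ 2 * Real.log 2 + 2 * m * Real.log 4)} ≥ 3 / 4 := by
  have hℓ2_le_ℓ1 : σ * √(∑ j, β j ^ 2) * √(2 * m ^ 2 * log 2 + 2 * m * log 4)
      ≤ σ * (∑ j, |β j|) * √(2 * m ^ 2 * log 2 + 2 * m * log 4) := by
    gcongr
    exact sqrt_sum_sq_le_sum_abs _ _
  suffices h : ℙ {ω | ∑ i, |(η ω).mulVec β i| ≤
      σ * √(∑ j, β j ^ 2) * √(2 * m ^ 2 * log 2 + 2 * m * log 4)} ≥ 3 / 4 from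
    ⟨h, h.trans (measure_mono fun ω hω ↦ le_trans hω hℓ2_le_ℓ1)⟩
  by_cases hβ : β = 0
  · subst hβ
    simpa using (ENNReal.div_le_of_le_mul (by norm_num) : (3 / 4 : ℝ≥0∞) ≤ 1)
  have hS : 0 < ∑ j, β j ^ 2 := by
    obtain ⟨j, hj⟩ := Function.ne_iff.1 hβ
    exact Finset.sum_pos' (fun j _ ↦ sq_nonneg (β j))
      ⟨j, Finset.mem_univ j, pow_two_pos_of_ne_zero hj⟩
  have hvar : ((σ ^ 2).toNNReal : ℝ) * ∑ j, β j ^ 2 = (σ * √(∑ j, β j ^ 2)) ^ 2 := by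
    rw [Real.coe_toNNReal _ (sq_nonneg σ), mul_pow, sq_sqrt hS.le]
  have htail := measureReal_lt_sum_abs_mulVec_le hindep hlaw β
    (t := σ * √(∑ j, β j ^ 2) * √(2 * m ^ 2 * log 2 + 2 * m * log 4)) (by positivity)
  rw [hvar, Fintype.card_fin, two_pow_mul_exp_neg_eq_one_fourth hm (by positivity)] at htail
  have hquarter : ENNReal.ofReal (1 - 1 / 4) = 3 / 4 := by
    rw [show (1 - 1 / 4 : ℝ) = 3 / 4 by norm_num, ENNReal.ofReal_div_of_pos (by norm_num)]
    simp
  exact hquarter ▸ ofReal_one_sub_le_measure_le_of_measureReal_lt_le htail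

/-- If the rows of the `m × d` random matrix `η` are i.i.d. isotropic Gaussians
`N(0, σ² I_d)`, then for every fixed `β ∈ ℝ^d`, with probability at least `3/4`,
`‖η β‖₁ ≤ σ·‖β‖₂·√(2m² ln 2 + 2m ln 4)`; since `‖β‖₂ ≤ ‖β‖₁`, the same bound holds with
`‖β‖₁` in place of `‖β‖₂`. -/
theorem stmt15 {Ω : Type*} [MeasureSpace Ω] [IsProbabilityMeasure (ℙ : Measure Ω)]
    (σ : ℝ) (hσ : 0 < σ) (m d : ℕ) (hm : 1 ≤ m) (hd : 1 ≤ d)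
    (η : Ω → Matrix (Fin m) (Fin d) ℝ)
    (hmeas : ∀ p : Fin m × Fin d, Measurable fun ω => η ω p.1 p.2)
    (hindep : iIndepFun
      (fun (p : Fin m × Fin d) ω => η ω p.1 p.2) ℙ)
    (hlaw : ∀ p : Fin m × Fin d,
      Measure.map (fun ω => η ω p.1 p.2) ℙ = gaussianReal 0 (σ ^ 2).toNNReal)
    (β : Fin d → ℝ) :
    ℙ {ω | ∑ i, |(η ω).mulVec β i| ≤
        σ * Real.sqrt (∑ j, (β j) ^ 2) *
          Real.sqrt (2 * m ^ 2 * Real.log 2 + 2 * m * Real.log 4)} ≥ 3 / 4 ∧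
    ℙ {ω | ∑ i, |(η ω).mulVec β i| ≤
        σ * (∑ j, |β j|) *
          Real.sqrt (2 * m ^ 2 * Real.log 2 + 2 * m * Real.log 4)} ≥ 3 / 4 :=
  stmt15_general σ hσ m d hm η hindep hlaw β
end

section
/- Let X ∈ ℝ^{n×d}, y ∈ ℝ^n, A = [X y] ∈ ℝ^{n×(d+1)}, and let η ∈ ℝ^{p×(d+1)} be any matrix. Let = [A; η] ∈ ℝ^{(n+p)×(d+1)}, let S ∈ ℝ^{r×(n+p)}, and suppose there exist constants 0 < c₀ ≤ C₀ such that c₀‖Âv‖₁ ≤ ‖SÂv‖₁ ≤ C₀‖Âv‖₁ for every v ∈ ℝ^{d+1}. If β ∈ ℝ^d minimizes the sketched ℓ₁ objective β̃ ↦ ‖SÂβ̃₋₁‖₁, where β̃₋₁ = (β̃, −1), then for every β̃ ∈ ℝ^d: (i) ‖SÂβ₋₁‖₁ ≤ C₀·(‖Xβ̃ − y‖₁ + ‖ηβ̃₋₁‖₁), and (ii) ‖Xβ − y‖₁ + ‖ηβ₋₁‖₁ ≤ (C₀/c₀)·(‖Xβ̃ − y‖₁ + ‖ηβ̃₋₁‖₁).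 That is, solving the ℓ₁ regression problem on the sketch SÂ is equivalent to approximately solving the regularized ℓ₁ regression problem β̃ ↦ ‖Xβ̃ − y‖₁ + ‖ηβ̃₋₁‖₁. -/
open Matrix BigOperators

/-- `ℓ₁` norm of a vector. -/
def l1Norm {ι : Type*} [Fintype ι] (v : ι → ℝ) : ℝ := ∑ i, |v i|

/-
The regularized objective `‖Xβ̃ − y‖₁ + ‖ηβ̃₋₁‖₁` is exactly `‖Âβ̃₋₁‖₁`, since the rows of
`Â = [A; η]` split the `ℓ₁` norm and `Aβ̃₋₁ = Xβ̃ − y`. The sketch distorts `‖Â ·‖₁` by factors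
between `c₀` and `C₀`, so a minimizer of the sketched objective loses at most `C₀` against any
competitor in the sketched value, and at most `C₀ / c₀` in the original one.
-/

lemma l1Norm_sumElim {ι κ : Type*} [Fintype ι] [Fintype κ] (u : ι → ℝ) (w : κ → ℝ) :
    l1Norm (Sum.elim u w) = l1Norm u + l1Norm w :=
  Fintype.sum_sum_type _

lemma l1Norm_fromRows_mulVec {ι κ μ : Type*} [Fintype ι] [Fintype κ] [Fintype μ]
    (A : Matrix ι μ ℝ) (η : Matrix κ μ ℝ) (v : μ → ℝ) :
    l1Norm (fromRows A η *ᵥ v) = l1Norm (A *ᵥ v) + l1Norm (η *ᵥ v) := by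
  rw [fromRows_mulVec, l1Norm_sumElim]

lemma augmented_mulVec_sumElim_neg_one {ι μ : Type*} [Fintype μ]
    (X : Matrix ι μ ℝ) (y : ι → ℝ) (b : μ → ℝ) :
    (fun i => Sum.elim (X i) fun _ => y i : Matrix ι (μ ⊕ Unit) ℝ) *ᵥ
        Sum.elim b (fun _ => -1) = X *ᵥ b - y := by
  ext i
  simp [mulVec, dotProduct, Fintype.sum_sum_type, sub_eq_add_neg]

section Minimizer

variable {α : Type*} {F G : α → ℝ} {c₀ C₀ : ℝ} {a : α}

lemma minimizer_le_mul (hF : ∀ x, F x ≤ C₀ * G x) (hmin : ∀ x, F a ≤ F x) (b : α) :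
    F a ≤ C₀ * G b :=
  (hmin b).trans (hF b)

lemma minimizer_le_div_mul (hc₀ : 0 < c₀) (hG : ∀ x, c₀ * G x ≤ F x)
    (hF : ∀ x, F x ≤ C₀ * G x) (hmin : ∀ x, F a ≤ F x) (b : α) :
    G a ≤ C₀ / c₀ * G b := by
  rw [div_mul_eq_mul_div, le_div_iff₀ hc₀, mul_comm]
  exact (hG a).trans (minimizer_le_mul hF hmin b)

end Minimizer

theorem stmt16_general {n d p r : ℕ} (X : Matrix (Fin n) (Fin d) ℝ) (y : Fin n → ℝ)
    (A : Matrix (Fin n) (Fin d ⊕ Unit) ℝ)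
    (hA : A = fun i => Sum.elim (X i) (fun _ => y i))
    (η : Matrix (Fin p) (Fin d ⊕ Unit) ℝ)
    (Ahat : Matrix (Fin n ⊕ Fin p) (Fin d ⊕ Unit) ℝ)
    (hAhat : Ahat = Matrix.fromRows A η)
    (S : Matrix (Fin r) (Fin n ⊕ Fin p) ℝ)
    (c₀ C₀ : ℝ) (hc₀ : 0 < c₀)
    (hembed : ∀ v : Fin d ⊕ Unit → ℝ,
      c₀ * l1Norm (Ahat.mulVec v) ≤ l1Norm ((S * Ahat).mulVec v) ∧
      l1Norm ((S * Ahat).mulVec v) ≤ C₀ * l1Norm (Ahat.mulVec v))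
    (β : Fin d → ℝ)
    (hmin : ∀ βt : Fin d → ℝ,
      l1Norm ((S * Ahat).mulVec (Sum.elim β fun _ => -1)) ≤
        l1Norm ((S * Ahat).mulVec (Sum.elim βt fun _ => -1))) :
    (∀ βt : Fin d → ℝ,
      l1Norm ((S * Ahat).mulVec (Sum.elim β fun _ => -1)) ≤
        C₀ * (l1Norm (X.mulVec βt - y) + l1Norm (η.mulVec (Sum.elim βt fun _ => -1)))) ∧
    (∀ βt : Fin d → ℝ,
      l1Norm (X.mulVec β - y) + l1Norm (η.mulVec (Sum.elim β fun _ => -1)) ≤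
        (C₀ / c₀) *
          (l1Norm (X.mulVec βt - y) + l1Norm (η.mulVec (Sum.elim βt fun _ => -1)))) := by
  have hobjective : ∀ βt : Fin d → ℝ, l1Norm (Ahat *ᵥ Sum.elim βt fun _ => -1) =
      l1Norm (X *ᵥ βt - y) + l1Norm (η *ᵥ Sum.elim βt fun _ => -1) := by
    intro βt
    rw [hAhat, l1Norm_fromRows_mulVec, hA, augmented_mulVec_sumElim_neg_one]
  have hlower := fun βt : Fin d → ℝ => (hembed (Sum.elim βt fun _ => -1)).1
  have hupper := fun βt : Fin d → ℝ => (hembed (Sum.elim βt fun _ => -1)).2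
  simp only [hobjective] at hlower hupper ⊢
  exact ⟨minimizer_le_mul hupper hmin, minimizer_le_div_mul hc₀ hlower hupper hmin⟩

/-- Solving `ℓ₁` regression on a sketch of the noise-augmented matrix `Â = [A; η]`
(where `A = [X y]`) approximately minimizes the regularized objective
`β̃ ↦ ‖X β̃ − y‖₁ + ‖η β̃₋₁‖₁`, provided `c₀‖Â v‖₁ ≤ ‖S Â v‖₁ ≤ C₀‖Â v‖₁` for all `v`. -/
theorem stmt16 {n d p r : ℕ} (X : Matrix (Fin n) (Fin d) ℝ) (y : Fin n → ℝ)
    (A : Matrix (Fin n) (Fin d ⊕ Unit) ℝ)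
    (hA : A = fun i => Sum.elim (X i) (fun _ => y i))
    (η : Matrix (Fin p) (Fin d ⊕ Unit) ℝ)
    (Ahat : Matrix (Fin n ⊕ Fin p) (Fin d ⊕ Unit) ℝ)
    (hAhat : Ahat = Matrix.fromRows A η)
    (S : Matrix (Fin r) (Fin n ⊕ Fin p) ℝ)
    (c₀ C₀ : ℝ) (hc₀ : 0 < c₀) (hc₀C₀ : c₀ ≤ C₀)
    (hembed : ∀ v : Fin d ⊕ Unit → ℝ,
      c₀ * l1Norm (Ahat.mulVec v) ≤ l1Norm ((S * Ahat).mulVec v) ∧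
      l1Norm ((S * Ahat).mulVec v) ≤ C₀ * l1Norm (Ahat.mulVec v))
    (β : Fin d → ℝ)
    (hmin : ∀ βt : Fin d → ℝ,
      l1Norm ((S * Ahat).mulVec (Sum.elim β fun _ => -1)) ≤
        l1Norm ((S * Ahat).mulVec (Sum.elim βt fun _ => -1))) :
    (∀ βt : Fin d → ℝ,
      l1Norm ((S * Ahat).mulVec (Sum.elim β fun _ => -1)) ≤
        C₀ * (l1Norm (X.mulVec βt - y) + l1Norm (η.mulVec (Sum.elim βt fun _ => -1)))) ∧
    (∀ βt : Fin d → ℝ,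
      l1Norm (X.mulVec β - y) + l1Norm (η.mulVec (Sum.elim β fun _ => -1)) ≤
        (C₀ / c₀) *
          (l1Norm (X.mulVec βt - y) + l1Norm (η.mulVec (Sum.elim βt fun _ => -1)))) :=
  stmt16_general X y A hA η Ahat hAhat S c₀ C₀ hc₀ hembed β hmin
end
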